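/- On GL(n,ℂ)×Matₙ(ℂ), for 1 ≤ i ≤ m ≤ n and z ∈ ℂ define L_{m,i}(z)(g,B) = (exp(zN)·g, exp(zN)·B·exp(−zN)) where N = ι_m((B_{(m)})^{i−1}), and R_{m,i}(z)(g,B) = (g·exp(−zN′), B) where N′ = ι_m((((−g^{−1}Bg))_{(m)})^{i−1}). Then: (i) each of L_{m,i} and R_{m,i} is a one-parameter group: L_{m,i}(z+w) = L_{m,i}(z)∘L_{m,i}(w) and R_{m,i}(z+w) = R_{m,i}(z)∘R_{m,i}(w); (ii) all transformations L_{m,i}(z) and R_{m′,i′}(w) pairwise commute, for all admissible indices and all z, w ∈ ℂ; (iii) for m = n the two families coincide up to reparametrization: R_{n,i}(z) = L_{n,i}((−1)^i z) for all i and z. (These are the two commuting Gelfand–Zeitlin actions on T*GL(n,ℂ), induced by the left and the right GL(n,ℂ)-actions, which together give an action of ℂ^{n²}.) -/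

import Mathlib

/-!
For an `m × m` block `X`, `exp (z • ι X) = 1 + ι (exp (z • X) - 1)` is block diagonal, so
conjugating `B` by it conjugates each minor `B_(m')`, `m' ≥ m`, by the corresponding block matrix.
When `X` is a power of `B_(m)` this fixes `B_(m)` and hence all smaller minors, and it conjugates
the generators `ι((B_(m'))^j)`, `m' ≥ m`, along with `B`. These two facts make each `L_{m,i}` a
one-parameter group and make any two of them commute.

The involution `σ (g, B) = (g⁻¹, -g⁻¹ B g)`, induced by `g ↦ g⁻¹`, exchanges the two moment maps
and satisfies `R_{m,i}(z) = σ ∘ L_{m,i}(z) ∘ σ`, which carries all of this over to the `R` flows.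
`L` and `R` commute because `L` leaves `-g⁻¹ B g` unchanged. For `m = n`, `-g⁻¹ B g` is conjugate
to `-B`, whence `R_{n,i}(z) = L_{n,i}((-1)^i z)`.
-/

open Matrix

noncomputable section

/-- Upper-left `m × m` submatrix of an `n × n` matrix. -/
def ulMinor {n : ℕ} (m : ℕ) (hm : m ≤ n) (B : Matrix (Fin n) (Fin n) ℂ) :
    Matrix (Fin m) (Fin m) ℂ :=
  fun i j => B (Fin.castLE hm i) (Fin.castLE hm j)

/-- The embedding `ι_m` of `m × m` matrices into `n × n` matrices, placing the matrix in
the upper-left block and zeros elsewhere. -/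
def iotaEmb {m : ℕ} (n : ℕ) (X : Matrix (Fin m) (Fin m) ℂ) : Matrix (Fin n) (Fin n) ℂ :=
  fun i j => if hi : (i : ℕ) < m then
    (if hj : (j : ℕ) < m then X ⟨i, hi⟩ ⟨j, hj⟩ else 0) else 0

/-- The left Gelfand–Zeitlin flow `L_{m,i}(z)` on `T*GL(n,ℂ) ≅ GL(n,ℂ) × Matₙ(ℂ)`. -/
def gzL {n : ℕ} (m i : ℕ) (hm : m ≤ n) (z : ℂ)
    (p : Matrix (Fin n) (Fin n) ℂ × Matrix (Fin n) (Fin n) ℂ) :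
    Matrix (Fin n) (Fin n) ℂ × Matrix (Fin n) (Fin n) ℂ :=
  let N := iotaEmb n ((ulMinor m hm p.2) ^ (i - 1))
  (NormedSpace.exp (z • N) * p.1,
   NormedSpace.exp (z • N) * p.2 * NormedSpace.exp ((-z) • N))

/-- The right Gelfand–Zeitlin flow `R_{m,i}(z)` on `T*GL(n,ℂ) ≅ GL(n,ℂ) × Matₙ(ℂ)`. -/
def gzR {n : ℕ} (m i : ℕ) (hm : m ≤ n) (z : ℂ)
    (p : Matrix (Fin n) (Fin n) ℂ × Matrix (Fin n) (Fin n) ℂ) :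
    Matrix (Fin n) (Fin n) ℂ × Matrix (Fin n) (Fin n) ℂ :=
  let N' := iotaEmb n ((ulMinor m hm (-(p.1⁻¹ * p.2 * p.1))) ^ (i - 1))
  (p.1 * NormedSpace.exp ((-z) • N'), p.2)

open NormedSpace
open scoped Nat

namespace Matrix

variable {ι 𝕜 : Type*} [Fintype ι] [DecidableEq ι] [RCLike 𝕜]

theorem hasSum_exp (A : Matrix ι ι 𝕜) : HasSum (fun k => (k ! : 𝕜)⁻¹ • A ^ k) (exp A) := by
  open scoped Norms.Operator in exact exp_series_hasSum_exp' A

theorem exp_add_smul (N : Matrix ι ι 𝕜) (z w : 𝕜) :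
    exp ((z + w) • N) = exp (z • N) * exp (w • N) := by
  rw [add_smul]
  exact exp_add_of_commute _ _ (((Commute.refl N).smul_left z).smul_right w)

theorem exp_smul_mul_exp_neg_smul (N : Matrix ι ι 𝕜) (z : 𝕜) :
    exp (z • N) * exp ((-z) • N) = 1 := by
  rw [← exp_add_smul, add_neg_cancel, zero_smul, exp_zero]

theorem exp_neg_smul_mul_exp_smul (N : Matrix ι ι 𝕜) (z : 𝕜) :
    exp ((-z) • N) * exp (z • N) = 1 := by
  simpa using exp_smul_mul_exp_neg_smul N (-z)

theorem exp_neg_smul_mul_exp_smul_mul (N A : Matrix ι ι 𝕜) (z : 𝕜) :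
    exp ((-z) • N) * (exp (z • N) * A) = A := by
  rw [← mul_assoc, exp_neg_smul_mul_exp_smul, one_mul]

theorem inv_exp_smul (N : Matrix ι ι 𝕜) (z : 𝕜) : (exp (z • N))⁻¹ = exp ((-z) • N) := by
  rw [neg_smul, Matrix.exp_neg]

def expSmulUnit (N : Matrix ι ι 𝕜) (z : 𝕜) : (Matrix ι ι 𝕜)ˣ :=
  ⟨exp (z • N), exp ((-z) • N), exp_smul_mul_exp_neg_smul N z, exp_neg_smul_mul_exp_smul N z⟩

def expConj (N : Matrix ι ι 𝕜) (z : 𝕜) (A : Matrix ι ι 𝕜) : Matrix ι ι 𝕜 :=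
  exp (z • N) * A * exp ((-z) • N)

theorem expConj_add (N A : Matrix ι ι 𝕜) (z w : 𝕜) :
    expConj N (z + w) A = expConj N z (expConj N w A) := by
  simp only [expConj, exp_add_smul, neg_add_rev, mul_assoc]

theorem expConj_eq_self_of_commute {N A : Matrix ι ι 𝕜} (h : Commute N A) (z : 𝕜) :
    expConj N z A = A := by
  rw [expConj, ((h.smul_left z).exp_left).eq, mul_assoc, exp_smul_mul_exp_neg_smul, mul_one]

theorem expConj_mul_exp_smul (N A : Matrix ι ι 𝕜) (z : 𝕜) :
    expConj N z A * exp (z • N) = exp (z • N) * A := by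
  rw [expConj, mul_assoc, exp_neg_smul_mul_exp_smul, mul_one]

theorem expConj_pow (N A : Matrix ι ι 𝕜) (z : 𝕜) (k : ℕ) :
    expConj N z (A ^ k) = expConj N z A ^ k :=
  (Units.conj_pow (expSmulUnit N z) A k).symm

theorem exp_smul_expConj (N A : Matrix ι ι 𝕜) (z w : 𝕜) :
    exp (w • expConj N z A) = expConj N z (exp (w • A)) := by
  have : w • expConj N z A = expConj N z (w • A) := by
    simp only [expConj, Matrix.mul_smul, Matrix.smul_mul]
  rw [this]
  exact exp_units_conj (expSmulUnit N z) (w • A)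

theorem expConj_expConj_expConj (N M A : Matrix ι ι 𝕜) (z w : 𝕜) :
    expConj (expConj N z M) w (expConj N z A) = expConj N z (expConj M w A) := by
  rw [expConj, exp_smul_expConj, exp_smul_expConj]
  simp only [expConj, mul_assoc, exp_neg_smul_mul_exp_smul_mul]

end Matrix

section Flows

variable {ι 𝕜 : Type*} [Fintype ι] [DecidableEq ι] [RCLike 𝕜]

def cotangentInversion (p : Matrix ι ι 𝕜 × Matrix ι ι 𝕜) : Matrix ι ι 𝕜 × Matrix ι ι 𝕜 :=
  (p.1⁻¹, -(p.1⁻¹ * p.2 * p.1))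

def leftFlow (F : Matrix ι ι 𝕜 → Matrix ι ι 𝕜) (z : 𝕜) (p : Matrix ι ι 𝕜 × Matrix ι ι 𝕜) :
    Matrix ι ι 𝕜 × Matrix ι ι 𝕜 :=
  (exp (z • F p.2) * p.1, expConj (F p.2) z p.2)

def rightFlow (F : Matrix ι ι 𝕜 → Matrix ι ι 𝕜) (z : 𝕜) (p : Matrix ι ι 𝕜 × Matrix ι ι 𝕜) :
    Matrix ι ι 𝕜 × Matrix ι ι 𝕜 :=
  (p.1 * exp ((-z) • F (cotangentInversion p).2), p.2)

variable {F G : Matrix ι ι 𝕜 → Matrix ι ι 𝕜} {p : Matrix ι ι 𝕜 × Matrix ι ι 𝕜}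

theorem isUnit_cotangentInversion_fst (hp : IsUnit p.1) : IsUnit (cotangentInversion p).1 :=
  isUnit_nonsing_inv_iff.2 hp

theorem cotangentInversion_cotangentInversion (hp : IsUnit p.1) :
    cotangentInversion (cotangentInversion p) = p := by
  have hdet : IsUnit p.1.det := (isUnit_iff_isUnit_det _).1 hp
  simp only [cotangentInversion, nonsing_inv_nonsing_inv _ hdet, mul_neg, neg_mul, neg_neg,
    ← mul_assoc, mul_nonsing_inv _ hdet, one_mul]
  rw [mul_assoc, mul_nonsing_inv _ hdet, mul_one]

theorem isUnit_leftFlow_fst (z : 𝕜) (hp : IsUnit p.1) : IsUnit (leftFlow F z p).1 :=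
  (Matrix.isUnit_exp _).mul hp

theorem rightFlow_eq_cotangentInversion_leftFlow (z : 𝕜) (hp : IsUnit p.1) :
    rightFlow F z p = cotangentInversion (leftFlow F z (cotangentInversion p)) := by
  have hdet : IsUnit p.1.det := (isUnit_iff_isUnit_det _).1 hp
  simp only [rightFlow, leftFlow, cotangentInversion, expConj, Matrix.mul_inv_rev, inv_exp_smul,
    nonsing_inv_nonsing_inv _ hdet, mul_neg, neg_mul, neg_neg, mul_assoc,
    exp_neg_smul_mul_exp_smul_mul, mul_nonsing_inv _ hdet, mul_one,
    mul_nonsing_inv_cancel_left _ _ hdet]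

theorem leftFlow_add (hF : ∀ w B, F (expConj (F B) w B) = F B) (z w : 𝕜) :
    leftFlow F (z + w) p = leftFlow F z (leftFlow F w p) := by
  simp only [leftFlow, hF, exp_add_smul, expConj_add, mul_assoc]

theorem leftFlow_comm (hFG : ∀ w B, F (expConj (G B) w B) = F B)
    (hGF : ∀ z B, G (expConj (F B) z B) = expConj (F B) z (G B)) (z w : 𝕜) :
    leftFlow F z (leftFlow G w p) = leftFlow G w (leftFlow F z p) := by
  simp only [leftFlow, hFG, hGF, exp_smul_expConj, expConj_expConj_expConj, Prod.mk.injEq,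
    and_true]
  rw [← mul_assoc, ← mul_assoc, expConj_mul_exp_smul]

theorem rightFlow_rightFlow (z w : 𝕜) (hp : IsUnit p.1) :
    rightFlow F z (rightFlow G w p) =
      cotangentInversion (leftFlow F z (leftFlow G w (cotangentInversion p))) := by
  have hq := isUnit_leftFlow_fst (F := G) w (isUnit_cotangentInversion_fst hp)
  rw [rightFlow_eq_cotangentInversion_leftFlow _ hp,
    rightFlow_eq_cotangentInversion_leftFlow _ (isUnit_cotangentInversion_fst hq),
    cotangentInversion_cotangentInversion hq]

theorem rightFlow_add (hF : ∀ w B, F (expConj (F B) w B) = F B) (z w : 𝕜) (hp : IsUnit p.1) :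
    rightFlow F (z + w) p = rightFlow F z (rightFlow F w p) := by
  rw [rightFlow_eq_cotangentInversion_leftFlow _ hp, leftFlow_add hF, rightFlow_rightFlow _ _ hp]

theorem rightFlow_comm (hFG : ∀ w B, F (expConj (G B) w B) = F B)
    (hGF : ∀ z B, G (expConj (F B) z B) = expConj (F B) z (G B)) (z w : 𝕜) (hp : IsUnit p.1) :
    rightFlow F z (rightFlow G w p) = rightFlow G w (rightFlow F z p) := by
  rw [rightFlow_rightFlow _ _ hp, rightFlow_rightFlow _ _ hp, leftFlow_comm hFG hGF]

theorem leftFlow_rightFlow_comm (z w : 𝕜) :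
    leftFlow F z (rightFlow G w p) = rightFlow G w (leftFlow F z p) := by
  simp only [leftFlow, rightFlow, cotangentInversion, expConj, Matrix.mul_inv_rev, inv_exp_smul,
    mul_assoc, exp_neg_smul_mul_exp_smul_mul]

theorem rightFlow_pow_eq_leftFlow (j : ℕ) (z : 𝕜) (hp : IsUnit p.1) :
    rightFlow (· ^ j) z p = leftFlow (· ^ j) ((-1) ^ (j + 1) * z) p := by
  obtain ⟨g, B⟩ := p
  obtain ⟨u, rfl⟩ : IsUnit g := hp
  have hgen : (-z) • (-((↑u : Matrix ι ι 𝕜)⁻¹ * B * u)) ^ j =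
      (↑u⁻¹ : Matrix ι ι 𝕜) * (((-1) ^ (j + 1) * z) • B ^ j) * u := by
    rw [← neg_one_smul 𝕜 ((↑u : Matrix ι ι 𝕜)⁻¹ * B * u), smul_pow, ← coe_units_inv,
      Units.conj_pow', smul_smul, Matrix.mul_smul, Matrix.smul_mul, pow_succ]
    congr 1
    ring
  simp only [rightFlow, leftFlow, cotangentInversion, expConj_eq_self_of_commute
    ((Commute.refl B).pow_left j)]
  rw [hgen, Matrix.exp_units_conj', ← mul_assoc, ← mul_assoc, Units.mul_inv, one_mul]

end Flows

theorem Fin.sum_univ_eq_sum_castLE {M : Type*} [AddCommMonoid M] {m n : ℕ} (h : m ≤ n)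
    (f : Fin n → M) (hf : ∀ k : Fin n, m ≤ (k : ℕ) → f k = 0) :
    ∑ k, f k = ∑ k : Fin m, f (Fin.castLE h k) :=
  (Fintype.sum_of_injective _ (Fin.castLE_injective h) _ f
    (fun k hk => hf k (by simpa [Fin.range_castLE] using hk)) fun _ => rfl).symm

section Minors

variable {m m' n : ℕ}

theorem iotaEmb_apply_of_le_left (X : Matrix (Fin m) (Fin m) ℂ) {i : Fin n} (hi : m ≤ (i : ℕ))
    (j : Fin n) : iotaEmb n X i j = 0 := by
  simp [iotaEmb, Nat.not_lt.2 hi]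

theorem iotaEmb_apply_of_le_right (X : Matrix (Fin m) (Fin m) ℂ) (i : Fin n) {j : Fin n}
    (hj : m ≤ (j : ℕ)) : iotaEmb n X i j = 0 := by
  simp [iotaEmb, Nat.not_lt.2 hj]

theorem iotaEmb_add (X Y : Matrix (Fin m) (Fin m) ℂ) :
    iotaEmb n (X + Y) = iotaEmb n X + iotaEmb n Y := by
  ext i j; simp only [iotaEmb, Matrix.add_apply]; split_ifs <;> simp

theorem iotaEmb_smul (z : ℂ) (X : Matrix (Fin m) (Fin m) ℂ) :
    iotaEmb n (z • X) = z • iotaEmb n X := by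
  ext i j; simp only [iotaEmb, Matrix.smul_apply]; split_ifs <;> simp

def iotaEmbₗ (n : ℕ) : Matrix (Fin m) (Fin m) ℂ →ₗ[ℂ] Matrix (Fin n) (Fin n) ℂ where
  toFun := iotaEmb n
  map_add' := iotaEmb_add
  map_smul' := iotaEmb_smul

theorem iotaEmb_sub (X Y : Matrix (Fin m) (Fin m) ℂ) :
    iotaEmb n (X - Y) = iotaEmb n X - iotaEmb n Y :=
  map_sub (iotaEmbₗ n) X Y

theorem iotaEmb_self (X : Matrix (Fin m) (Fin m) ℂ) : iotaEmb m X = X := by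
  ext i j; simp [iotaEmb]

theorem iotaEmb_iotaEmb (h : m ≤ m') (X : Matrix (Fin m) (Fin m) ℂ) :
    iotaEmb n (iotaEmb m' X) = iotaEmb n X := by
  ext i j; simp only [iotaEmb]; split_ifs <;> first | rfl | omega

theorem ulMinor_add (hm : m ≤ n) (A B : Matrix (Fin n) (Fin n) ℂ) :
    ulMinor m hm (A + B) = ulMinor m hm A + ulMinor m hm B := rfl

theorem ulMinor_ulMinor (h : m ≤ m') (h' : m' ≤ n) (B : Matrix (Fin n) (Fin n) ℂ) :
    ulMinor m h (ulMinor m' h' B) = ulMinor m (h.trans h') B := rfl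

theorem iotaEmb_mul (h : m ≤ n) (X Y : Matrix (Fin m) (Fin m) ℂ) :
    iotaEmb n (X * Y) = iotaEmb n X * iotaEmb n Y := by
  ext i j
  rw [mul_apply, Fin.sum_univ_eq_sum_castLE h _ fun k hk => by
    rw [iotaEmb_apply_of_le_right X i hk, zero_mul]]
  by_cases hi : (i : ℕ) < m
  · by_cases hj : (j : ℕ) < m
    · simp [iotaEmb, hi, hj, mul_apply]
    · simp [iotaEmb, hj]
  · simp [iotaEmb, hi]

theorem iotaEmb_pow_succ (h : m ≤ n) (X : Matrix (Fin m) (Fin m) ℂ) (k : ℕ) :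
    iotaEmb n (X ^ (k + 1)) = iotaEmb n X ^ (k + 1) := by
  induction k with
  | zero => simp
  | succ k ih => rw [pow_succ, iotaEmb_mul h, ih, ← pow_succ]

theorem ulMinor_iotaEmb_mul (h : m ≤ m') (h' : m' ≤ n) (Y : Matrix (Fin m) (Fin m) ℂ)
    (B : Matrix (Fin n) (Fin n) ℂ) :
    ulMinor m' h' (iotaEmb n Y * B) = iotaEmb m' Y * ulMinor m' h' B := by
  ext i j
  rw [ulMinor, mul_apply, Fin.sum_univ_eq_sum_castLE h' _ fun k hk => by
    rw [iotaEmb_apply_of_le_right Y _ (h.trans hk), zero_mul]]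
  rfl

theorem ulMinor_mul_iotaEmb (h : m ≤ m') (h' : m' ≤ n) (Y : Matrix (Fin m) (Fin m) ℂ)
    (B : Matrix (Fin n) (Fin n) ℂ) :
    ulMinor m' h' (B * iotaEmb n Y) = ulMinor m' h' B * iotaEmb m' Y := by
  ext i j
  rw [ulMinor, mul_apply, Fin.sum_univ_eq_sum_castLE h' _ fun k hk => by
    rw [iotaEmb_apply_of_le_left Y (h.trans hk), mul_zero]]
  rfl

theorem exp_iotaEmb (h : m ≤ n) (X : Matrix (Fin m) (Fin m) ℂ) :
    exp (iotaEmb n X) = 1 + iotaEmb n (exp X - 1) := by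
  set Q : Matrix (Fin n) (Fin n) ℂ := 1 - iotaEmb n (1 : Matrix (Fin m) (Fin m) ℂ) with hQ
  -- the two exponential series differ only in their constant terms, `1` and `ι 1`
  have hterm : ∀ k : ℕ, (k ! : ℂ)⁻¹ • iotaEmb n X ^ k =
      iotaEmb n ((k ! : ℂ)⁻¹ • X ^ k) + if k = 0 then Q else 0 := by
    rintro (_ | k)
    · simp [hQ]
    · simp [iotaEmb_smul, iotaEmb_pow_succ h]
  have hsum : HasSum (fun k => (k ! : ℂ)⁻¹ • iotaEmb n X ^ k) (iotaEmb n (exp X) + Q) := by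
    simp only [hterm]
    exact ((hasSum_exp X).map (iotaEmbₗ n) (iotaEmbₗ n).continuous_of_finiteDimensional).add
      (hasSum_ite_eq 0 Q)
  rw [(hasSum_exp _).unique hsum, iotaEmb_sub, hQ]
  abel

theorem ulMinor_expConj_iotaEmb (h : m ≤ m') (h' : m' ≤ n) (X : Matrix (Fin m) (Fin m) ℂ) (z : ℂ)
    (B : Matrix (Fin n) (Fin n) ℂ) :
    ulMinor m' h' (expConj (iotaEmb n X) z B) = expConj (iotaEmb m' X) z (ulMinor m' h' B) := by
  simp only [expConj, ← iotaEmb_smul, exp_iotaEmb (h.trans h'), exp_iotaEmb h, add_mul, mul_add,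
    one_mul, mul_one, ulMinor_add, ulMinor_iotaEmb_mul h h', ulMinor_mul_iotaEmb h h']

theorem iotaEmb_expConj_iotaEmb (h : m ≤ m') (h' : m' ≤ n) (X : Matrix (Fin m) (Fin m) ℂ) (z : ℂ)
    (W : Matrix (Fin m') (Fin m') ℂ) :
    iotaEmb n (expConj (iotaEmb m' X) z W) = expConj (iotaEmb n X) z (iotaEmb n W) := by
  simp only [expConj, ← iotaEmb_smul, exp_iotaEmb h, exp_iotaEmb (h.trans h'), add_mul, mul_add,
    one_mul, mul_one, iotaEmb_add, iotaEmb_mul h', iotaEmb_iotaEmb h]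

end Minors

section GelfandZeitlin

variable {m m' n : ℕ}

def gzGenerator (m : ℕ) (hm : m ≤ n) (j : ℕ) (B : Matrix (Fin n) (Fin n) ℂ) :
    Matrix (Fin n) (Fin n) ℂ :=
  iotaEmb n (ulMinor m hm B ^ j)

theorem ulMinor_expConj_gzGenerator (h : m ≤ m') (hm : m ≤ n) (hm' : m' ≤ n) (j : ℕ) (z : ℂ)
    (B : Matrix (Fin n) (Fin n) ℂ) :
    ulMinor m hm (expConj (gzGenerator m' hm' j B) z B) = ulMinor m hm B := by
  rw [← ulMinor_ulMinor h hm', gzGenerator, ulMinor_expConj_iotaEmb le_rfl hm', iotaEmb_self,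
    expConj_eq_self_of_commute ((Commute.refl _).pow_left j), ulMinor_ulMinor]

theorem gzGenerator_expConj_gzGenerator_of_le (h : m ≤ m') (hm : m ≤ n) (hm' : m' ≤ n)
    (j j' : ℕ) (z : ℂ) (B : Matrix (Fin n) (Fin n) ℂ) :
    gzGenerator m hm j (expConj (gzGenerator m' hm' j' B) z B) = gzGenerator m hm j B :=
  congrArg (fun A => iotaEmb n (A ^ j)) (ulMinor_expConj_gzGenerator h hm hm' j' z B)

theorem gzGenerator_expConj_gzGenerator_of_ge (h : m ≤ m') (hm : m ≤ n) (hm' : m' ≤ n)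
    (j j' : ℕ) (z : ℂ) (B : Matrix (Fin n) (Fin n) ℂ) :
    gzGenerator m' hm' j' (expConj (gzGenerator m hm j B) z B) =
      expConj (gzGenerator m hm j B) z (gzGenerator m' hm' j' B) := by
  rw [gzGenerator, gzGenerator, gzGenerator, ulMinor_expConj_iotaEmb h hm', ← expConj_pow,
    iotaEmb_expConj_iotaEmb h hm']

theorem gzL_eq_leftFlow (m i : ℕ) (hm : m ≤ n) :
    gzL m i hm = leftFlow (gzGenerator m hm (i - 1)) :=
  rfl

theorem gzR_eq_rightFlow (m i : ℕ) (hm : m ≤ n) :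
    gzR m i hm = rightFlow (gzGenerator m hm (i - 1)) :=
  rfl

variable {p : Matrix (Fin n) (Fin n) ℂ × Matrix (Fin n) (Fin n) ℂ}

theorem gzL_add (i : ℕ) (hm : m ≤ n) (z w : ℂ) :
    gzL m i hm (z + w) p = gzL m i hm z (gzL m i hm w p) :=
  leftFlow_add (gzGenerator_expConj_gzGenerator_of_le le_rfl hm hm _ _) z w

theorem gzR_add (i : ℕ) (hm : m ≤ n) (z w : ℂ) (hp : IsUnit p.1) :
    gzR m i hm (z + w) p = gzR m i hm z (gzR m i hm w p) :=
  rightFlow_add (gzGenerator_expConj_gzGenerator_of_le le_rfl hm hm _ _) z w hp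

theorem gzL_comm (i i' : ℕ) (hm : m ≤ n) (hm' : m' ≤ n) (z w : ℂ) :
    gzL m i hm z (gzL m' i' hm' w p) = gzL m' i' hm' w (gzL m i hm z p) := by
  rcases le_total m m' with h | h
  · exact leftFlow_comm (gzGenerator_expConj_gzGenerator_of_le h hm hm' _ _)
      (gzGenerator_expConj_gzGenerator_of_ge h hm hm' _ _) z w
  · exact (leftFlow_comm (gzGenerator_expConj_gzGenerator_of_le h hm' hm _ _)
      (gzGenerator_expConj_gzGenerator_of_ge h hm' hm _ _) w z).symm

theorem gzR_comm (i i' : ℕ) (hm : m ≤ n) (hm' : m' ≤ n) (z w : ℂ) (hp : IsUnit p.1) :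
    gzR m i hm z (gzR m' i' hm' w p) = gzR m' i' hm' w (gzR m i hm z p) := by
  rcases le_total m m' with h | h
  · exact rightFlow_comm (gzGenerator_expConj_gzGenerator_of_le h hm hm' _ _)
      (gzGenerator_expConj_gzGenerator_of_ge h hm hm' _ _) z w hp
  · exact (rightFlow_comm (gzGenerator_expConj_gzGenerator_of_le h hm' hm _ _)
      (gzGenerator_expConj_gzGenerator_of_ge h hm' hm _ _) w z hp).symm

theorem gzL_gzR_comm (i i' : ℕ) (hm : m ≤ n) (hm' : m' ≤ n) (z w : ℂ) :
    gzL m i hm z (gzR m' i' hm' w p) = gzR m' i' hm' w (gzL m i hm z p) := by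
  rw [gzL_eq_leftFlow, gzR_eq_rightFlow]
  exact leftFlow_rightFlow_comm z w

theorem gzR_self_eq_gzL {i : ℕ} (hi : 1 ≤ i) (z : ℂ) (hp : IsUnit p.1) :
    gzR n i le_rfl z p = gzL n i le_rfl ((-1) ^ i * z) p := by
  obtain ⟨j, rfl⟩ : ∃ j, i = j + 1 := ⟨i - 1, by omega⟩
  have hgen : gzGenerator n le_rfl j = (· ^ j) := funext fun B => iotaEmb_self _
  rw [gzR_eq_rightFlow, gzL_eq_leftFlow, Nat.add_sub_cancel, hgen,
    rightFlow_pow_eq_leftFlow _ _ hp]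

end GelfandZeitlin

theorem gz_actions_on_cotangent_GL_general (n : ℕ) :
    (∀ (m i : ℕ), 1 ≤ i → i ≤ m → ∀ hm : m ≤ n, ∀ (z w : ℂ)
      (p : Matrix (Fin n) (Fin n) ℂ × Matrix (Fin n) (Fin n) ℂ), IsUnit p.1 →
        gzL m i hm (z + w) p = gzL m i hm z (gzL m i hm w p) ∧
        gzR m i hm (z + w) p = gzR m i hm z (gzR m i hm w p)) ∧
    (∀ (m i m' i' : ℕ), 1 ≤ i → i ≤ m → ∀ hm : m ≤ n, 1 ≤ i' → i' ≤ m' → ∀ hm' : m' ≤ n,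
      ∀ (z w : ℂ) (p : Matrix (Fin n) (Fin n) ℂ × Matrix (Fin n) (Fin n) ℂ), IsUnit p.1 →
        gzL m i hm z (gzL m' i' hm' w p) = gzL m' i' hm' w (gzL m i hm z p) ∧
        gzR m i hm z (gzR m' i' hm' w p) = gzR m' i' hm' w (gzR m i hm z p) ∧
        gzL m i hm z (gzR m' i' hm' w p) = gzR m' i' hm' w (gzL m i hm z p)) ∧
    (∀ (i : ℕ), 1 ≤ i → ∀ hi : i ≤ n, ∀ (z : ℂ)
      (p : Matrix (Fin n) (Fin n) ℂ × Matrix (Fin n) (Fin n) ℂ), IsUnit p.1 →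
        gzR n i le_rfl z p = gzL n i le_rfl ((-1 : ℂ) ^ i * z) p) :=
  ⟨fun _ i _ _ hm z w _ hp => ⟨gzL_add i hm z w, gzR_add i hm z w hp⟩,
    fun _ i _ i' _ _ hm _ _ hm' z w _ hp =>
      ⟨gzL_comm i i' hm hm' z w, gzR_comm i i' hm hm' z w hp, gzL_gzR_comm i i' hm hm' z w⟩,
    fun _ hi _ z _ hp => gzR_self_eq_gzL hi z hp⟩

/-- The two commuting Gelfand–Zeitlin actions on `T*GL(n,ℂ)`: (i) `L_{m,i}` and `R_{m,i}`
are one-parameter groups; (ii) all the transformations `L_{m,i}(z)`, `R_{m',i'}(w)`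
pairwise commute; (iii) for `m = n` the two families coincide up to reparametrization:
`R_{n,i}(z) = L_{n,i}((−1)^i z)`. -/
theorem gz_actions_on_cotangent_GL (n : ℕ) (hn : 1 ≤ n) :
    (∀ (m i : ℕ), 1 ≤ i → i ≤ m → ∀ hm : m ≤ n, ∀ (z w : ℂ)
      (p : Matrix (Fin n) (Fin n) ℂ × Matrix (Fin n) (Fin n) ℂ), IsUnit p.1 →
        gzL m i hm (z + w) p = gzL m i hm z (gzL m i hm w p) ∧
        gzR m i hm (z + w) p = gzR m i hm z (gzR m i hm w p)) ∧
    (∀ (m i m' i' : ℕ), 1 ≤ i → i ≤ m → ∀ hm : m ≤ n, 1 ≤ i' → i' ≤ m' → ∀ hm' : m' ≤ n,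
      ∀ (z w : ℂ) (p : Matrix (Fin n) (Fin n) ℂ × Matrix (Fin n) (Fin n) ℂ), IsUnit p.1 →
        gzL m i hm z (gzL m' i' hm' w p) = gzL m' i' hm' w (gzL m i hm z p) ∧
        gzR m i hm z (gzR m' i' hm' w p) = gzR m' i' hm' w (gzR m i hm z p) ∧
        gzL m i hm z (gzR m' i' hm' w p) = gzR m' i' hm' w (gzL m i hm z p)) ∧
    (∀ (i : ℕ), 1 ≤ i → ∀ hi : i ≤ n, ∀ (z : ℂ)
      (p : Matrix (Fin n) (Fin n) ℂ × Matrix (Fin n) (Fin n) ℂ), IsUnit p.1 →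
        gzR n i le_rfl z p = gzL n i le_rfl ((-1 : ℂ) ^ i * z) p) :=
  gz_actions_on_cotangent_GL_general n
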